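/- Let 𝒟 be a dataset, Π a program, and I a two-valued interpretation. Then I is a stable HT-model of 𝒟 and Π if and only if I is a two-valued stable model of 𝒟 and Π, i.e. if and only if I is the least fixpoint of the operator X ↦ A¹_{𝒟,Π}(X,I) and the least fixpoint of the operator X ↦ A²_{𝒟,Π}(I,X). -/

import Mathlib

/- DatalogMTL with negation: common definitions.
   The timeline `T` is an arbitrary linearly ordered additive commutative group
   (covering both ℤ and ℚ); `A` is the type of ground relational atoms. -/

namespace DatalogMTL

/-- An interval on the timeline: a nonempty convex subset whose infimum and
supremum lie in `T ∪ {−∞, +∞}` (i.e. if bounded below/above, a greatest lower /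
least upper bound exists in `T`). -/
structure TInterval (T : Type*) [AddCommGroup T] [LinearOrder T] [IsOrderedAddMonoid T] where
  carrier : Set T
  nonempty : carrier.Nonempty
  convex : ∀ ⦃t₁ t₂ t : T⦄, t₁ ∈ carrier → t₂ ∈ carrier → t₁ < t → t < t₂ → t ∈ carrier
  exists_glb : BddBelow carrier → ∃ a, IsGLB carrier a
  exists_lub : BddAbove carrier → ∃ b, IsLUB carrier b

/-- A non-negative interval. -/
def TInterval.Nonneg {T : Type*} [AddCommGroup T] [LinearOrder T] [IsOrderedAddMonoid T] (δ : TInterval T) : Prop :=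
  ∀ t ∈ δ.carrier, 0 ≤ t

/-- The type of non-negative intervals. -/
abbrev NNInterval (T : Type*) [AddCommGroup T] [LinearOrder T] [IsOrderedAddMonoid T] :=
  {δ : TInterval T // δ.Nonneg}

/-- A (two-valued) interpretation assigns to each timepoint a set of ground
relational atoms; the order is pointwise inclusion. -/
abbrev Interp (T A : Type*) := T → Set A

/-- Ground metric atoms. -/
inductive MetricAtom (T : Type*) [AddCommGroup T] [LinearOrder T] [IsOrderedAddMonoid T] (A : Type*) where
  | top
  | bot
  | rel (a : A)
  | dMinus (δ : NNInterval T) (M : MetricAtom T A)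
  | dPlus (δ : NNInterval T) (M : MetricAtom T A)
  | boxMinus (δ : NNInterval T) (M : MetricAtom T A)
  | boxPlus (δ : NNInterval T) (M : MetricAtom T A)
  | sSince (δ : NNInterval T) (M₁ M₂ : MetricAtom T A)
  | sUntil (δ : NNInterval T) (M₁ M₂ : MetricAtom T A)

/-- Ground head atoms: `⊤ | P(s) | ⊟_δ M | ⊞_δ M`. -/
inductive HeadAtom (T : Type*) [AddCommGroup T] [LinearOrder T] [IsOrderedAddMonoid T] (A : Type*) where
  | top
  | rel (a : A)
  | boxMinus (δ : NNInterval T) (M : HeadAtom T A)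
  | boxPlus (δ : NNInterval T) (M : HeadAtom T A)

variable {T A : Type*} [AddCommGroup T] [LinearOrder T] [IsOrderedAddMonoid T]

/-- Head atoms are metric atoms. -/
def HeadAtom.toMetric : HeadAtom T A → MetricAtom T A
  | .top => .top
  | .rel a => .rel a
  | .boxMinus δ M => .boxMinus δ M.toMetric
  | .boxPlus δ M => .boxPlus δ M.toMetric

/-- Two-valued semantics: `sat I M t` holds iff `⟦M⟧_I(t) = true`
(the truth order `false ≤τ true` is implication). -/
def sat (I : Interp T A) : MetricAtom T A → T → Prop
  | .top, _ => True
  | .bot, _ => False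
  | .rel a, t => a ∈ I t
  | .dMinus δ M, t => ∃ t', t - t' ∈ δ.1.carrier ∧ sat I M t'
  | .dPlus δ M, t => ∃ t', t' - t ∈ δ.1.carrier ∧ sat I M t'
  | .boxMinus δ M, t => ∀ t', t - t' ∈ δ.1.carrier → sat I M t'
  | .boxPlus δ M, t => ∀ t', t' - t ∈ δ.1.carrier → sat I M t'
  | .sSince δ M₁ M₂, t =>
      ∃ t', t - t' ∈ δ.1.carrier ∧ sat I M₂ t' ∧ ∀ t'', t' < t'' → t'' < t → sat I M₁ t''
  | .sUntil δ M₁ M₂, t =>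
      ∃ t', t' - t ∈ δ.1.carrier ∧ sat I M₂ t' ∧ ∀ t'', t < t'' → t'' < t' → sat I M₁ t''

/-- A ground rule body `M₁ ∧ … ∧ M_k ∧ not M_{k+1} ∧ … ∧ not M_m`. -/
structure Body (T : Type*) [AddCommGroup T] [LinearOrder T] [IsOrderedAddMonoid T] (A : Type*) where
  pos : List (MetricAtom T A)
  neg : List (MetricAtom T A)

/-- Two-valued evaluation of a body: the `≤τ`-infimum (conjunction) of its literals. -/
def Body.holds (B : Body T A) (I : Interp T A) (t : T) : Prop :=
  (∀ M ∈ B.pos, sat I M t) ∧ (∀ M ∈ B.neg, ¬ sat I M t)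

/-- A ground rule `M ← B`. -/
structure Rule (T : Type*) [AddCommGroup T] [LinearOrder T] [IsOrderedAddMonoid T] (A : Type*) where
  head : HeadAtom T A
  body : Body T A

/-- A program, represented by its grounding `ground(Π)`: a set of ground rules. -/
abbrev Program (T : Type*) [AddCommGroup T] [LinearOrder T] [IsOrderedAddMonoid T] (A : Type*) := Set (Rule T A)

/-- The function `F` linking a ground head atom to the (atom, timepoint) pairs it refers to. -/
def F : HeadAtom T A → T → Set (HeadAtom T A × T)
  | .boxMinus δ M, t => ⋃ t' ∈ {s : T | t - s ∈ δ.1.carrier}, F M t'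
  | .boxPlus δ M, t => ⋃ t' ∈ {s : T | s - t ∈ δ.1.carrier}, F M t'
  | .top, t => {(.top, t)}
  | .rel a, t => {(.rel a, t)}

/-- A dataset: a finite set of relational facts `P(s)@δ`. -/
structure Dataset (T : Type*) [AddCommGroup T] [LinearOrder T] [IsOrderedAddMonoid T] (A : Type*) where
  facts : Set (A × TInterval T)
  finite : facts.Finite

/-- `I` is a model of the dataset `D`. -/
def Interp.modelOfDataset (I : Interp T A) (D : Dataset T A) : Prop :=
  ∀ a δ, (a, δ) ∈ D.facts → ∀ t ∈ δ.carrier, a ∈ I t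

/-- `I` is a two-valued model of `D` and `Π`. -/
def IsTwoValModel (I : Interp T A) (D : Dataset T A) (P : Program T A) : Prop :=
  I.modelOfDataset D ∧ ∀ r ∈ P, ∀ t : T, r.body.holds I t → sat I r.head.toMetric t

/- Three-valued truth values are identified with consistent pairs of (Prop-valued)
truth values: `true = (True, True)`, `undef = (False, True)`, `false = (False, False)`.
The truth order `false ≤τ undef ≤τ true` is the componentwise order. -/

/-- The three-valued value of a ground metric atom in `𝓘 = (I₁, I₂)`. -/
def tv3 (I₁ I₂ : Interp T A) (M : MetricAtom T A) (t : T) : Prop × Prop :=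
  (sat I₁ M t, sat I₂ M t)

/-- The three-valued value of a negated ground metric atom `not M` in `𝓘 = (I₁, I₂)`:
the inverse `(·)⁻¹` of the value of `M`. -/
def tv3Not (I₁ I₂ : Interp T A) (M : MetricAtom T A) (t : T) : Prop × Prop :=
  (¬ sat I₂ M t, ¬ sat I₁ M t)

/-- Three-valued evaluation of a body: the `≤τ`-infimum of the values of its literals. -/
def Body.holds3 (B : Body T A) (I₁ I₂ : Interp T A) (t : T) : Prop × Prop :=
  ((∀ M ∈ B.pos, sat I₁ M t) ∧ (∀ M ∈ B.neg, ¬ sat I₂ M t),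
   (∀ M ∈ B.pos, sat I₂ M t) ∧ (∀ M ∈ B.neg, ¬ sat I₁ M t))

/-- The truth order `≤τ` on (pair-encoded) truth values. -/
def tauLE (u v : Prop × Prop) : Prop := (u.1 → v.1) ∧ (u.2 → v.2)

/-- The precision order `≤p` on (pair-encoded) truth values: `undef ≤p false`, `undef ≤p true`. -/
def precLE (u v : Prop × Prop) : Prop := (u.1 → v.1) ∧ (v.2 → u.2)

/-- A truth value equals `true = (True, True)`. -/
def tvIsTrue (v : Prop × Prop) : Prop := v.1 ∧ v.2

/-- A truth value differs from `false = (False, False)`. -/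
def tvNotFalse (v : Prop × Prop) : Prop := v.1 ∨ v.2

/-- The `≤τ`-infimum of a set of (pair-encoded) truth values. -/
def tvInf (S : Set (Prop × Prop)) : Prop × Prop := (∀ v ∈ S, v.1, ∀ v ∈ S, v.2)

/-- `(I₁, I₂)` is a three-valued model of the program `Π`. -/
def IsThreeValModelOfProgram (I₁ I₂ : Interp T A) (P : Program T A) : Prop :=
  ∀ r ∈ P, ∀ t : T, tauLE (r.body.holds3 I₁ I₂ t) (tv3 I₁ I₂ r.head.toMetric t)

/-- `(I₁, I₂)` is a three-valued model of `D` and `Π`. -/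
def IsThreeValModel (I₁ I₂ : Interp T A) (D : Dataset T A) (P : Program T A) : Prop :=
  IsThreeValModelOfProgram I₁ I₂ P ∧ I₁.modelOfDataset D

/-- The atoms holding at `t` by virtue of the dataset alone. -/
def dataFacts (D : Dataset T A) (t : T) : Set A :=
  {a | ∃ δ : TInterval T, (a, δ) ∈ D.facts ∧ t ∈ δ.carrier}

/-- The immediate consequence operator `T_{𝒟,Π}`. -/
def Tds (D : Dataset T A) (P : Program T A) (I : Interp T A) : Interp T A := fun t =>
  dataFacts D t ∪
    {a | ∃ r ∈ P, ∃ t' : T, r.body.holds I t' ∧ (HeadAtom.rel a, t) ∈ F r.head t'}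

/-- The first component `A¹_{𝒟,Π}` of the three-valued immediate consequence operator. -/
def A1 (D : Dataset T A) (P : Program T A) (I₁ I₂ : Interp T A) : Interp T A := fun t =>
  dataFacts D t ∪
    {a | ∃ r ∈ P, ∃ t' : T, tvIsTrue (r.body.holds3 I₁ I₂ t') ∧ (HeadAtom.rel a, t) ∈ F r.head t'}

/-- The second component `A²_{𝒟,Π}` of the three-valued immediate consequence operator. -/
def A2 (D : Dataset T A) (P : Program T A) (I₁ I₂ : Interp T A) : Interp T A := fun t =>
  dataFacts D t ∪
    {a | ∃ r ∈ P, ∃ t' : T, tvNotFalse (r.body.holds3 I₁ I₂ t') ∧ (HeadAtom.rel a, t) ∈ F r.head t'}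

/-- `(I₁, I₂)` is an HT-model of `D` and `Π` (Definition of Wałęga et al.). -/
def IsHTModel (D : Dataset T A) (P : Program T A) (I₁ I₂ : Interp T A) : Prop :=
  I₁.modelOfDataset D ∧ ∀ r ∈ P, ∀ t : T,
    (((∀ M ∈ r.body.pos, sat I₁ M t) ∧ (∀ M ∈ r.body.neg, ¬ sat I₂ M t)) →
        sat I₁ r.head.toMetric t) ∧
    (((∀ M ∈ r.body.pos, sat I₂ M t) ∧ (∀ M ∈ r.body.neg, ¬ sat I₂ M t)) →
        sat I₂ r.head.toMetric t)

/-- `I` is a stable HT-model of `D` and `Π`: `(I,I)` is an HT-model and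
`I = ⊓ {J : (J,I) is an HT-model of D and Π}`. -/
def IsStableHTModel (D : Dataset T A) (P : Program T A) (I : Interp T A) : Prop :=
  IsHTModel D P I I ∧ I = sInf {J : Interp T A | IsHTModel D P J I}

end DatalogMTL

/-!
Both sides say that `I` is the least fixpoint of the monotone immediate consequence operator
`R_I` of the Gelfond–Lifschitz reduct of `Π` by `I`, in which positive body literals are read in
the argument and negative ones in `I`. Condition (1) for an HT-model `(J, I)` says exactly that
`J` is a prefixed point of `R_I`, so the stable HT-models are the `I` with
`I = ⋂ {J | R_I J ⊆ J} = lfp R_I`. On the other side, `A¹(X, I) = R_I X` whenever `X ⊆ I`, every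
fixpoint of `A¹(·, I)` lies below `I` as soon as `I` is a model, and `A²(I, X) ⊇ R_I X` for all `X`.
-/

namespace DatalogMTL

variable {T A : Type*} [AddCommGroup T] [LinearOrder T] [IsOrderedAddMonoid T]

theorem sat_mono {I J : Interp T A} (h : I ≤ J) (M : MetricAtom T A) (t : T) :
    sat I M t → sat J M t := by
  induction M generalizing t with
  | top => exact id
  | bot => exact id
  | rel a => exact fun ha => h t ha
  | dMinus δ M ih => exact fun ⟨t', hδ, hM⟩ => ⟨t', hδ, ih t' hM⟩
  | dPlus δ M ih => exact fun ⟨t', hδ, hM⟩ => ⟨t', hδ, ih t' hM⟩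
  | boxMinus δ M ih => exact fun hM t' hδ => ih t' (hM t' hδ)
  | boxPlus δ M ih => exact fun hM t' hδ => ih t' (hM t' hδ)
  | sSince δ M₁ M₂ ih₁ ih₂ =>
      exact fun ⟨t', hδ, h₂, h₁⟩ => ⟨t', hδ, ih₂ t' h₂, fun t'' ha hb => ih₁ t'' (h₁ t'' ha hb)⟩
  | sUntil δ M₁ M₂ ih₁ ih₂ =>
      exact fun ⟨t', hδ, h₂, h₁⟩ => ⟨t', hδ, ih₂ t' h₂, fun t'' ha hb => ih₁ t'' (h₁ t'' ha hb)⟩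

theorem sat_toMetric_iff (K : Interp T A) (M : HeadAtom T A) (t : T) :
    sat K M.toMetric t ↔ ∀ a s, (HeadAtom.rel a, s) ∈ F M t → a ∈ K s := by
  induction M generalizing t with
  | top => simp [HeadAtom.toMetric, sat, F]
  | rel b => simp [HeadAtom.toMetric, sat, F]
  | boxMinus δ M ih =>
      simp only [HeadAtom.toMetric, sat, F, Set.mem_iUnion, ih]
      grind
  | boxPlus δ M ih =>
      simp only [HeadAtom.toMetric, sat, F, Set.mem_iUnion, ih]
      grind

/-- The immediate consequence operator of the Gelfond–Lifschitz reduct of `P` by `I`. -/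
def reduct (D : Dataset T A) (P : Program T A) (I : Interp T A) : Interp T A →o Interp T A where
  toFun X t := dataFacts D t ∪
    {a | ∃ r ∈ P, ∃ t' : T, ((∀ M ∈ r.body.pos, sat X M t') ∧ (∀ M ∈ r.body.neg, ¬ sat I M t')) ∧
      (HeadAtom.rel a, t) ∈ F r.head t'}
  monotone' _ _ hXY _ := Set.union_subset_union_right _
    fun _ ⟨r, hr, t', ⟨hpos, hneg⟩, hF⟩ =>
      ⟨r, hr, t', ⟨fun M hM => sat_mono hXY M t' (hpos M hM), hneg⟩, hF⟩

variable {D : Dataset T A} {P : Program T A}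

theorem reduct_le_iff {I J : Interp T A} :
    reduct D P I J ≤ J ↔ J.modelOfDataset D ∧ ∀ r ∈ P, ∀ t : T,
      ((∀ M ∈ r.body.pos, sat J M t) ∧ (∀ M ∈ r.body.neg, ¬ sat I M t)) →
        sat J r.head.toMetric t := by
  simp only [sat_toMetric_iff]
  constructor
  · intro h
    exact ⟨fun a δ hδ t ht => h t (Or.inl ⟨δ, hδ, ht⟩),
      fun r hr t hbody a s hF => h s (Or.inr ⟨r, hr, t, hbody, hF⟩)⟩
  · rintro ⟨hD, hP⟩ t a (⟨δ, hδ, ht⟩ | ⟨r, hr, t', hbody, hF⟩)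
    · exact hD a δ hδ t ht
    · exact hP r hr t' hbody a t hF

theorem isHTModel_iff {I J : Interp T A} :
    IsHTModel D P J I ↔
      reduct D P I J ≤ J ∧ ∀ r ∈ P, ∀ t : T, r.body.holds I t → sat I r.head.toMetric t := by
  rw [reduct_le_iff]
  exact ⟨fun ⟨hD, hP⟩ => ⟨⟨hD, fun r hr t => (hP r hr t).1⟩, fun r hr t => (hP r hr t).2⟩,
    fun ⟨⟨hD, hP₁⟩, hP₂⟩ => ⟨hD, fun r hr t => ⟨hP₁ r hr t, hP₂ r hr t⟩⟩⟩

theorem isHTModel_self_iff {I : Interp T A} : IsHTModel D P I I ↔ reduct D P I I ≤ I :=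
  isHTModel_iff.trans ⟨And.left, fun h => ⟨h, (reduct_le_iff.1 h).2⟩⟩

theorem sInf_isHTModel_eq_lfp {I : Interp T A} (h : reduct D P I I ≤ I) :
    sInf {J | IsHTModel D P J I} = OrderHom.lfp (reduct D P I) :=
  have hI := (isHTModel_iff.1 (isHTModel_self_iff.2 h)).2
  congrArg sInf (Set.ext fun _ => isHTModel_iff.trans (and_iff_left hI))

theorem reduct_self_eq_of_lfp_eq {I : Interp T A} (h : OrderHom.lfp (reduct D P I) = I) :
    reduct D P I I = I := by
  have hfix := OrderHom.map_lfp (reduct D P I)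
  rwa [h] at hfix

theorem isStableHTModel_iff_lfp_eq {I : Interp T A} :
    IsStableHTModel D P I ↔ OrderHom.lfp (reduct D P I) = I := by
  constructor
  · rintro ⟨hII, hinf⟩
    exact (sInf_isHTModel_eq_lfp (isHTModel_self_iff.1 hII)).symm.trans hinf.symm
  · intro h
    have hfix := (reduct_self_eq_of_lfp_eq h).le
    exact ⟨isHTModel_self_iff.2 hfix, h.symm.trans (sInf_isHTModel_eq_lfp hfix).symm⟩

theorem A1_le_reduct_self (X I : Interp T A) : A1 D P X I ≤ reduct D P I I :=
  fun _ => Set.union_subset_union_right _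
    fun _ ⟨r, hr, t', ⟨⟨_, hneg⟩, hpos, _⟩, hF⟩ => ⟨r, hr, t', ⟨hpos, hneg⟩, hF⟩

theorem A1_eq_reduct {X I : Interp T A} (h : X ≤ I) : A1 D P X I = reduct D P I X := by
  funext t
  refine congrArg (dataFacts D t ∪ ·) (Set.ext fun a => ⟨?_, ?_⟩)
  · exact fun ⟨r, hr, t', ⟨hbody, _⟩, hF⟩ => ⟨r, hr, t', hbody, hF⟩
  · exact fun ⟨r, hr, t', ⟨hpos, hneg⟩, hF⟩ => ⟨r, hr, t', ⟨⟨hpos, hneg⟩,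
      fun M hM => sat_mono h M t' (hpos M hM), fun M hM hX => hneg M hM (sat_mono h M t' hX)⟩, hF⟩

theorem reduct_le_A2 (I X : Interp T A) : reduct D P I X ≤ A2 D P I X :=
  fun _ => Set.union_subset_union_right _
    fun _ ⟨r, hr, t', hbody, hF⟩ => ⟨r, hr, t', Or.inr hbody, hF⟩

theorem A2_eq_reduct {I X : Interp T A} (h : I ≤ X) : A2 D P I X = reduct D P I X := by
  refine le_antisymm (fun t => Set.union_subset_union_right _ ?_) (reduct_le_A2 I X)
  rintro a ⟨r, hr, t', ⟨hpos, hneg⟩ | hbody, hF⟩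
  · exact ⟨r, hr, t', ⟨fun M hM => sat_mono h M t' (hpos M hM),
      fun M hM hI => hneg M hM (sat_mono h M t' hI)⟩, hF⟩
  · exact ⟨r, hr, t', hbody, hF⟩

end DatalogMTL

open DatalogMTL in
/-- `I` is a stable HT-model of `D` and `Π` iff `I` is a two-valued
stable model of `D` and `Π`, i.e. iff `I` is the least fixpoint of
`X ↦ A¹_{𝒟,Π}(X, I)` and the least fixpoint of `X ↦ A²_{𝒟,Π}(I, X)`. -/
theorem statement17 {T A : Type*} [AddCommGroup T] [LinearOrder T] [IsOrderedAddMonoid T]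
    (D : DatalogMTL.Dataset T A) (P : DatalogMTL.Program T A)
    (I : DatalogMTL.Interp T A) :
    DatalogMTL.IsStableHTModel D P I ↔
      (IsLeast {X : DatalogMTL.Interp T A | DatalogMTL.A1 D P X I = X} I ∧
       IsLeast {X : DatalogMTL.Interp T A | DatalogMTL.A2 D P I X = X} I) := by
  rw [isStableHTModel_iff_lfp_eq]
  constructor
  · intro hlfp
    have hfix := reduct_self_eq_of_lfp_eq hlfp
    refine ⟨⟨(A1_eq_reduct le_rfl).trans hfix, fun X hX => ?_⟩,
      ⟨(A2_eq_reduct le_rfl).trans hfix, fun X hX => ?_⟩⟩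
    · have hXI : X ≤ I := hX ▸ (A1_le_reduct_self X I).trans hfix.le
      rw [← hlfp]
      exact OrderHom.lfp_le _ ((A1_eq_reduct hXI).symm.trans hX).le
    · rw [← hlfp]
      exact OrderHom.lfp_le _ ((reduct_le_A2 I X).trans hX.le)
  · rintro ⟨⟨hfix, hleast⟩, -⟩
    have hlfp_le : OrderHom.lfp (reduct D P I) ≤ I :=
      OrderHom.lfp_le _ ((A1_eq_reduct le_rfl).symm.trans hfix).le
    exact hlfp_le.antisymm (hleast ((A1_eq_reduct hlfp_le).trans (OrderHom.map_lfp _)))
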